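/- Let M be the 3×3 real matrix with 0 on the diagonal and 1/2 in every off-diagonal entry, and let (aₙ) be defined by a₁ = a₂ = 1 and aₙ = aₙ₋₁ + 2aₙ₋₂ for n ≥ 3. Then for every n ≥ 2, the matrix power Mⁿ is the matrix whose diagonal entries all equal aₙ₋₁/2ⁿ⁻¹ and whose off-diagonal entries all equal aₙ/2ⁿ. -/

import Mathlib

/-!
The 3×3 matrices with constant diagonal `d` and constant off-diagonal `o` are closed under
multiplication, and right multiplication by `M` sends `(d, o)` to `(o, (d + o) / 2)`. So the
entries of `Mⁿ` satisfy a two-term linear recurrence which, after scaling by `2ⁿ`, is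
`aₙ = aₙ₋₁ + 2aₙ₋₂`.
-/

/-- The matrix of the triangle transformation: zero diagonal, 1/2 off-diagonal. -/
noncomputable def M : Matrix (Fin 3) (Fin 3) ℝ :=
  fun i j => if i = j then 0 else 1 / 2

def diagOffDiag {R : Type*} (d o : R) : Matrix (Fin 3) (Fin 3) R :=
  fun i j => if i = j then d else o

theorem diagOffDiag_mul {R : Type*} [Semiring R] (d o d' o' : R) :
    diagOffDiag d o * diagOffDiag d' o' =
      diagOffDiag (d * d' + 2 * (o * o')) (d * o' + o * d' + o * o') := by
  ext i j
  fin_cases i <;> fin_cases j <;>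
    simp [Matrix.mul_apply, Fin.sum_univ_three, diagOffDiag, two_mul] <;> abel

theorem M_eq_diagOffDiag : M = diagOffDiag (0 : ℝ) (1 / 2) := rfl

theorem diagOffDiag_mul_M (d o : ℝ) : diagOffDiag d o * M = diagOffDiag o ((d + o) / 2) := by
  rw [M_eq_diagOffDiag, diagOffDiag_mul]
  congr 1 <;> ring

theorem matrix_power_formula (a : ℕ → ℝ) (h1 : a 1 = 1) (h2 : a 2 = 1)
    (hrec : ∀ n, 3 ≤ n → a n = a (n - 1) + 2 * a (n - 2)) :
    ∀ n, 2 ≤ n →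
      M ^ n = fun i j =>
        if i = j then a (n - 1) / 2 ^ (n - 1) else a n / 2 ^ n := by
  intro n hn
  induction n, hn using Nat.le_induction with
  | base =>
    change M ^ 2 = diagOffDiag _ _
    rw [pow_two, M_eq_diagOffDiag, diagOffDiag_mul, h1, h2]
    norm_num
  | succ n hn ih =>
    change M ^ n = diagOffDiag _ _ at ih
    change M ^ (n + 1) = diagOffDiag _ _
    obtain ⟨m, rfl⟩ : ∃ m, n = m + 2 := ⟨n - 2, by omega⟩
    have hrec_m : a (m + 3) = a (m + 2) + 2 * a (m + 1) := hrec (m + 3) (by omega)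
    rw [pow_succ, ih, diagOffDiag_mul_M]
    congr 1
    rw [show m + 2 + 1 = m + 3 from rfl, hrec_m, show m + 2 - 1 = m + 1 from rfl]
    field_simp
    ring
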